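/- Let r_L, r_M, ℓ_L, ℓ_M : ℕ → ℕ be eventually-zero non-increasing sequences and, for λ in a finite set Λ, W_L(λ), W_M(λ) : ℕ → ℕ eventually-zero non-increasing sequences, with r_L(0) = r_M(0) =: p, ℓ_L(0) = ℓ_M(0) =: q, r_L(i), r_M(i) ≤ p and ℓ_L(i), ℓ_M(i) ≤ q for all i. Assume (M1) Σ_{i=1}^j r_M(i) ≤ Σ_{i=1}^j r_L(i), (M2) Σ_{i=1}^j ℓ_M(i) ≤ Σ_{i=1}^j ℓ_L(i), and (M3) Σ_{i=1}^j W_L(λ)_i ≤ Σ_{i=1}^j W_M(λ)_i, for all j ≥ 1 and λ ∈ Λ. Then −Σ_{i≥0} r_L(i) r_L(i+1) − Σ_{i≥0} ℓ_L(i) ℓ_L(i+1) + Σ_{λ} Σ_{i≥1} W_L(λ)_i² ≤ −Σ_{i≥0} r_M(i) r_M(i+1) − Σ_{i≥0} ℓ_M(i) ℓ_M(i+1) + Σ_{λ} Σ_{i≥1} W_M(λ)_i², with equality if and only if r_L = r_M, ℓ_L = ℓ_M, and W_L(λ) = W_M(λ) for all λ ∈ Λ. -/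

import Mathlib

/-!
Everything reduces to Abel summation against the partial sums `D` of `y - x`, which are
nonnegative by the majorizations, with nonincreasing weights that vanish eventually.

For the squares, `∑ y² - ∑ x² = ∑ (x - y)² + 2 ∑ x (y - x)`, and the cross term is
`∑ (x j - x (j + 1)) D (j + 1) ≥ 0`; equality forces `∑ (x - y)² = 0`.

For the products, with `s = x + y` and `x 0 = y 0`,
`2 (∑ y i y (i + 1) - ∑ x i x (i + 1)) = ∑ (s i + s (i + 2)) (y (i + 1) - x (i + 1))`.
In the equality case, at the first index `k + 1` where `x` and `y` differ the partial sum is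
positive, so the weights are flat there; this makes `s` constant on `{k, k + 1}`, which together
with `x k = y k` forces `x (k + 1) = y (k + 1)`.
-/

open Finset

theorem sum_range_mul_eq_sum_range_sub_mul_partialSum {R : Type*} [CommRing R] (w d : ℕ → R)
    {N : ℕ} (hwN : w N = 0) :
    ∑ i ∈ range N, w i * d i =
      ∑ j ∈ range N, (w j - w (j + 1)) * ∑ i ∈ range (j + 1), d i := by
  have parts := sum_range_by_parts w d (N + 1)
  simp only [add_tsub_cancel_right, hwN, smul_eq_mul, zero_mul, zero_sub, sum_range_succ _ N,
    add_zero] at parts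
  rw [parts, ← sum_neg_distrib]
  exact sum_congr rfl fun j _ => by ring

theorem two_mul_sum_range_mul_succ_sub_eq {R : Type*} [CommRing R] (x y : ℕ → R) {N : ℕ}
    (h0 : x 0 = y 0) (hN : x N = y N) :
    2 * (∑ i ∈ range N, y i * y (i + 1) - ∑ i ∈ range N, x i * x (i + 1)) =
      ∑ i ∈ range N, (x i + y i + (x (i + 2) + y (i + 2))) * (y (i + 1) - x (i + 1)) := by
  have shift := sum_range_succ' (fun i => (y i - x i) * (x (i + 1) + y (i + 1))) N
  rw [sum_range_succ, h0, hN] at shift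
  simp only [sub_self, zero_mul, add_zero] at shift
  calc 2 * (∑ i ∈ range N, y i * y (i + 1) - ∑ i ∈ range N, x i * x (i + 1))
      = ∑ i ∈ range N, (y i - x i) * (x (i + 1) + y (i + 1)) +
          ∑ i ∈ range N, (x i + y i) * (y (i + 1) - x (i + 1)) := by
        rw [mul_sub, mul_sum, mul_sum, ← sum_sub_distrib, ← sum_add_distrib]
        exact sum_congr rfl fun i _ => by ring
    _ = _ := by
        rw [shift, ← sum_add_distrib]
        exact sum_congr rfl fun i _ => by ring

theorem antitone_add_add_comp_add_two {M : Type*} [AddCommMonoid M] [PartialOrder M]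
    [IsOrderedAddMonoid M] {x y : ℕ → M} (hx : Antitone x) (hy : Antitone y) :
    Antitone fun i => x i + y i + (x (i + 2) + y (i + 2)) := fun i j hij =>
  add_le_add (add_le_add (hx hij) (hy hij)) (add_le_add (hx (by omega)) (hy (by omega)))

section Ordered

variable {R : Type*} [CommRing R] [LinearOrder R] [IsStrictOrderedRing R]

theorem sum_range_mul_nonneg_of_antitone {w d : ℕ → R} {N : ℕ} (hw : Antitone w)
    (hwN : w N = 0) (hd : ∀ j, 0 ≤ ∑ i ∈ range j, d i) :
    0 ≤ ∑ i ∈ range N, w i * d i := by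
  rw [sum_range_mul_eq_sum_range_sub_mul_partialSum w d hwN]
  exact sum_nonneg fun j _ => mul_nonneg (sub_nonneg.2 (hw j.le_succ)) (hd _)

theorem eq_of_sum_range_mul_eq_zero_of_antitone {w d : ℕ → R} {N : ℕ} (hw : Antitone w)
    (hwN : w N = 0) (hd : ∀ j, 0 ≤ ∑ i ∈ range j, d i) (h : ∑ i ∈ range N, w i * d i = 0)
    {j : ℕ} (hj : j < N) (hdj : 0 < ∑ i ∈ range (j + 1), d i) : w (j + 1) = w j := by
  rw [sum_range_mul_eq_sum_range_sub_mul_partialSum w d hwN,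
    sum_eq_zero_iff_of_nonneg fun j _ => mul_nonneg (sub_nonneg.2 (hw j.le_succ)) (hd _)] at h
  rcases mul_eq_zero.1 (h j (mem_range.2 hj)) with hw' | hd'
  · exact (sub_eq_zero.1 hw').symm
  · exact absurd hd' hdj.ne'

theorem sum_range_sub_sq_le_sum_range_sq_sub {x y : ℕ → R} {N : ℕ}
    (hx : Antitone x) (hxN : x N = 0)
    (hxy : ∀ j, ∑ i ∈ range j, x i ≤ ∑ i ∈ range j, y i) :
    ∑ i ∈ range N, (x i - y i) ^ 2 ≤ ∑ i ∈ range N, y i ^ 2 - ∑ i ∈ range N, x i ^ 2 := by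
  have cross := sum_range_mul_nonneg_of_antitone (d := fun i => y i - x i) hx hxN
    fun j => by simpa only [sum_sub_distrib, sub_nonneg] using hxy j
  have expand : ∑ i ∈ range N, y i ^ 2 - ∑ i ∈ range N, x i ^ 2 =
      ∑ i ∈ range N, (x i - y i) ^ 2 + 2 * ∑ i ∈ range N, x i * (y i - x i) := by
    rw [mul_sum, ← sum_sub_distrib, ← sum_add_distrib]
    exact sum_congr rfl fun i _ => by ring
  linarith


theorem sum_range_mul_succ_le {x y : ℕ → R} {N : ℕ} (hx : Antitone x) (hy : Antitone y)
    (h0 : x 0 = y 0) (hxN : ∀ i, N ≤ i → x i = 0) (hyN : ∀ i, N ≤ i → y i = 0)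
    (hxy : ∀ j, ∑ i ∈ range j, x (i + 1) ≤ ∑ i ∈ range j, y (i + 1)) :
    ∑ i ∈ range N, x i * x (i + 1) ≤ ∑ i ∈ range N, y i * y (i + 1) := by
  have key := sum_range_mul_nonneg_of_antitone (antitone_add_add_comp_add_two hx hy)
    (N := N) (by simp [hxN, hyN]) (d := fun i => y (i + 1) - x (i + 1))
    fun j => by simpa only [sum_sub_distrib, sub_nonneg] using hxy j
  rw [← two_mul_sum_range_mul_succ_sub_eq x y h0 (by rw [hxN N le_rfl, hyN N le_rfl])] at key
  linarith

theorem eq_of_sum_range_mul_succ_eq {x y : ℕ → R} {N : ℕ} (hx : Antitone x) (hy : Antitone y)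
    (h0 : x 0 = y 0) (hxN : ∀ i, N ≤ i → x i = 0) (hyN : ∀ i, N ≤ i → y i = 0)
    (hxy : ∀ j, ∑ i ∈ range j, x (i + 1) ≤ ∑ i ∈ range j, y (i + 1))
    (h : ∑ i ∈ range N, x i * x (i + 1) = ∑ i ∈ range N, y i * y (i + 1)) : x = y := by
  have hd (j : ℕ) : 0 ≤ ∑ i ∈ range j, (y (i + 1) - x (i + 1)) := by
    simpa only [sum_sub_distrib, sub_nonneg] using hxy j
  have hzero :
      ∑ i ∈ range N, (x i + y i + (x (i + 2) + y (i + 2))) * (y (i + 1) - x (i + 1)) = 0 := by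
    rw [← two_mul_sum_range_mul_succ_sub_eq x y h0 (by rw [hxN N le_rfl, hyN N le_rfl]), h,
      sub_self, mul_zero]
  funext j
  induction j using Nat.strong_induction_on with
  | _ j ih =>
  cases j with
  | zero => exact h0
  | succ k =>
    by_contra hne
    have hpartial : ∑ i ∈ range (k + 1), (y (i + 1) - x (i + 1)) = y (k + 1) - x (k + 1) := by
      rw [sum_range_succ, sum_eq_zero fun i hi => by
        rw [ih (i + 1) (by simp only [mem_range] at hi; omega), sub_self], zero_add]
    have hlt : 0 < y (k + 1) - x (k + 1) :=
      lt_of_le_of_ne (hpartial ▸ hd (k + 1)) (sub_ne_zero.2 (Ne.symm hne)).symm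
    have hk : k < N := by
      by_contra! hk
      exact hne (by rw [hxN _ (by omega), hyN _ (by omega)])
    have hflat := eq_of_sum_range_mul_eq_zero_of_antitone
      (antitone_add_add_comp_add_two hx hy) (by simp [hxN, hyN]) hd hzero hk (hpartial ▸ hlt)
    linarith [hx k.le_succ, hy k.le_succ, hx (by omega : k + 2 ≤ k + 1 + 2),
      hy (by omega : k + 2 ≤ k + 1 + 2), ih k k.lt_succ_self]

end Ordered

theorem finsum_eq_sum_range_of_eq_zero {M : Type*} [AddCommMonoid M] {f : ℕ → M} {N : ℕ}
    (hf : ∀ i, N ≤ i → f i = 0) : ∑ᶠ i, f i = ∑ i ∈ range N, f i :=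
  finsum_eq_sum_of_support_subset f fun i hi => by
    by_contra hiN
    exact hi (hf i (by simpa using hiN))

theorem sum_Icc_one_eq_sum_range_succ {M : Type*} [AddCommMonoid M] (f : ℕ → M) (j : ℕ) :
    ∑ i ∈ Icc 1 j, f i = ∑ i ∈ range j, f (i + 1) := by
  rw [← Ico_add_one_right_eq_Icc, sum_Ico_eq_sum_range]
  simp [add_comm]

theorem sum_range_succ_cast_le_of_sum_Icc_le {R : Type*} [CommSemiring R] [PartialOrder R]
    [IsOrderedRing R] {x y : ℕ → ℕ}
    (hxy : ∀ j, 1 ≤ j → ∑ i ∈ Icc 1 j, x i ≤ ∑ i ∈ Icc 1 j, y i) (j : ℕ) :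
    ∑ i ∈ range j, (x (i + 1) : R) ≤ ∑ i ∈ range j, (y (i + 1) : R) := by
  rcases j.eq_zero_or_pos with rfl | hj
  · simp
  · have hj_le := hxy j hj
    rw [sum_Icc_one_eq_sum_range_succ, sum_Icc_one_eq_sum_range_succ] at hj_le
    simpa only [Nat.cast_sum] using Nat.mono_cast (α := R) hj_le

theorem exists_forall_ge_eq_zero_and {x y : ℕ → ℕ} (hx : ∃ N, ∀ i, N ≤ i → x i = 0)
    (hy : ∃ N, ∀ i, N ≤ i → y i = 0) : ∃ N, ∀ i, N ≤ i → x i = 0 ∧ y i = 0 :=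
  Filter.eventually_atTop.1 ((Filter.eventually_atTop.2 hx).and (Filter.eventually_atTop.2 hy))

theorem finsum_mul_succ_le_of_sum_Icc_le {x y : ℕ → ℕ} (hx : ∀ i, x (i + 1) ≤ x i)
    (hy : ∀ i, y (i + 1) ≤ y i) (hx0 : ∃ N, ∀ i, N ≤ i → x i = 0)
    (hy0 : ∃ N, ∀ i, N ≤ i → y i = 0) (h0 : x 0 = y 0)
    (hxy : ∀ j, 1 ≤ j → ∑ i ∈ Icc 1 j, x i ≤ ∑ i ∈ Icc 1 j, y i) :
    ∑ᶠ i, (x i : ℤ) * x (i + 1) ≤ ∑ᶠ i, (y i : ℤ) * y (i + 1) ∧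
      (∑ᶠ i, (x i : ℤ) * x (i + 1) = ∑ᶠ i, (y i : ℤ) * y (i + 1) → x = y) := by
  obtain ⟨N, hN⟩ := exists_forall_ge_eq_zero_and hx0 hy0
  have hX : Antitone fun i => (x i : ℤ) := antitone_nat_of_succ_le fun i => Nat.mono_cast (hx i)
  have hY : Antitone fun i => (y i : ℤ) := antitone_nat_of_succ_le fun i => Nat.mono_cast (hy i)
  have hXN (i) (hi : N ≤ i) : (x i : ℤ) = 0 := by simp [(hN i hi).1]
  have hYN (i) (hi : N ≤ i) : (y i : ℤ) = 0 := by simp [(hN i hi).2]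
  rw [finsum_eq_sum_range_of_eq_zero (N := N) fun i hi => by simp [hXN i hi],
    finsum_eq_sum_range_of_eq_zero (N := N) fun i hi => by simp [hYN i hi]]
  have hXY := sum_range_succ_cast_le_of_sum_Icc_le (R := ℤ) hxy
  have hX0 : (x 0 : ℤ) = y 0 := congrArg _ h0
  refine ⟨sum_range_mul_succ_le hX hY hX0 hXN hYN hXY, fun h => funext fun i => ?_⟩
  exact_mod_cast congrFun (eq_of_sum_range_mul_succ_eq hX hY hX0 hXN hYN hXY h) i

theorem finsum_sq_succ_le_of_sum_Icc_le {x y : ℕ → ℕ} (hx : ∀ i, 1 ≤ i → x (i + 1) ≤ x i)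
    (hx0 : ∃ N, ∀ i, N ≤ i → x i = 0) (hy0 : ∃ N, ∀ i, N ≤ i → y i = 0)
    (hxy : ∀ j, 1 ≤ j → ∑ i ∈ Icc 1 j, x i ≤ ∑ i ∈ Icc 1 j, y i) :
    ∑ᶠ i, (x (i + 1) : ℤ) ^ 2 ≤ ∑ᶠ i, (y (i + 1) : ℤ) ^ 2 ∧
      (∑ᶠ i, (x (i + 1) : ℤ) ^ 2 = ∑ᶠ i, (y (i + 1) : ℤ) ^ 2 → ∀ i, 1 ≤ i → x i = y i) := by
  obtain ⟨N, hN⟩ := exists_forall_ge_eq_zero_and hx0 hy0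
  have hX : Antitone fun i => (x (i + 1) : ℤ) :=
    antitone_nat_of_succ_le fun i => Nat.mono_cast (hx (i + 1) (by omega))
  rw [finsum_eq_sum_range_of_eq_zero (N := N) fun i _ => by simp [(hN (i + 1) (by omega)).1],
    finsum_eq_sum_range_of_eq_zero (N := N) fun i _ => by simp [(hN (i + 1) (by omega)).2]]
  have key := sum_range_sub_sq_le_sum_range_sq_sub hX (N := N)
    (by simp [(hN (N + 1) (by omega)).1]) (sum_range_succ_cast_le_of_sum_Icc_le hxy)
  have hsq : 0 ≤ ∑ i ∈ range N, ((x (i + 1) : ℤ) - y (i + 1)) ^ 2 :=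
    sum_nonneg fun i _ => sq_nonneg _
  refine ⟨by linarith, fun h i hi => ?_⟩
  have hzero : ∑ i ∈ range N, ((x (i + 1) : ℤ) - y (i + 1)) ^ 2 = 0 := by linarith
  obtain ⟨k, rfl⟩ : ∃ k, i = k + 1 := ⟨i - 1, by omega⟩
  rcases lt_or_ge k N with hk | hk
  · have hk_zero := (sum_eq_zero_iff_of_nonneg fun i _ => sq_nonneg _).1 hzero k (mem_range.2 hk)
    exact_mod_cast sub_eq_zero.1 (pow_eq_zero_iff two_ne_zero |>.1 hk_zero)
  · rw [(hN (k + 1) (by omega)).1, (hN (k + 1) (by omega)).2]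

theorem stmt_19_general (rL rM lL lM : ℕ → ℕ)
    (Λ : Type*) [Fintype Λ] (WL WM : Λ → ℕ → ℕ)
    (hrLmono : ∀ i, rL (i + 1) ≤ rL i) (hrMmono : ∀ i, rM (i + 1) ≤ rM i)
    (hlLmono : ∀ i, lL (i + 1) ≤ lL i) (hlMmono : ∀ i, lM (i + 1) ≤ lM i)
    (hWLmono : ∀ a, ∀ i, 1 ≤ i → WL a (i + 1) ≤ WL a i)
    (hrL0 : ∃ N, ∀ i, N ≤ i → rL i = 0) (hrM0 : ∃ N, ∀ i, N ≤ i → rM i = 0)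
    (hlL0 : ∃ N, ∀ i, N ≤ i → lL i = 0) (hlM0 : ∃ N, ∀ i, N ≤ i → lM i = 0)
    (hWL0 : ∀ a, ∃ N, ∀ i, N ≤ i → WL a i = 0)
    (hWM0 : ∀ a, ∃ N, ∀ i, N ≤ i → WM a i = 0)
    (hr00 : rL 0 = rM 0) (hl00 : lL 0 = lM 0)
    (hM1 : ∀ j, 1 ≤ j →
      ∑ i ∈ Finset.Icc 1 j, rM i ≤ ∑ i ∈ Finset.Icc 1 j, rL i)
    (hM2 : ∀ j, 1 ≤ j →
      ∑ i ∈ Finset.Icc 1 j, lM i ≤ ∑ i ∈ Finset.Icc 1 j, lL i)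
    (hM3 : ∀ a : Λ, ∀ j, 1 ≤ j →
      ∑ i ∈ Finset.Icc 1 j, WL a i ≤ ∑ i ∈ Finset.Icc 1 j, WM a i) :
    (-(∑ᶠ i : ℕ, ((rL i : ℤ) * rL (i + 1))) -
        (∑ᶠ i : ℕ, ((lL i : ℤ) * lL (i + 1))) +
        ∑ᶠ a : Λ, ∑ᶠ i : ℕ, (WL a (i + 1) : ℤ) ^ 2 ≤
      -(∑ᶠ i : ℕ, ((rM i : ℤ) * rM (i + 1))) -
        (∑ᶠ i : ℕ, ((lM i : ℤ) * lM (i + 1))) +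
        ∑ᶠ a : Λ, ∑ᶠ i : ℕ, (WM a (i + 1) : ℤ) ^ 2) ∧
    ((-(∑ᶠ i : ℕ, ((rL i : ℤ) * rL (i + 1))) -
        (∑ᶠ i : ℕ, ((lL i : ℤ) * lL (i + 1))) +
        ∑ᶠ a : Λ, ∑ᶠ i : ℕ, (WL a (i + 1) : ℤ) ^ 2 =
      -(∑ᶠ i : ℕ, ((rM i : ℤ) * rM (i + 1))) -
        (∑ᶠ i : ℕ, ((lM i : ℤ) * lM (i + 1))) +
        ∑ᶠ a : Λ, ∑ᶠ i : ℕ, (WM a (i + 1) : ℤ) ^ 2) ↔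
      (∀ i, rL i = rM i) ∧ (∀ i, lL i = lM i) ∧
        ∀ a : Λ, ∀ i, 1 ≤ i → WL a i = WM a i) := by
  obtain ⟨hr, hr_eq⟩ :=
    finsum_mul_succ_le_of_sum_Icc_le hrMmono hrLmono hrM0 hrL0 hr00.symm hM1
  obtain ⟨hl, hl_eq⟩ :=
    finsum_mul_succ_le_of_sum_Icc_le hlMmono hlLmono hlM0 hlL0 hl00.symm hM2
  have hW (a : Λ) := finsum_sq_succ_le_of_sum_Icc_le (hWLmono a) (hWL0 a) (hWM0 a) (hM3 a)
  have hW_le : ∑ᶠ a, ∑ᶠ i, (WL a (i + 1) : ℤ) ^ 2 ≤ ∑ᶠ a, ∑ᶠ i, (WM a (i + 1) : ℤ) ^ 2 := by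
    simpa only [finsum_eq_sum_of_fintype] using sum_le_sum fun a _ => (hW a).1
  refine ⟨by linarith, fun h => ⟨?_, ?_, fun a => (hW a).2 ?_⟩, fun ⟨hr', hl', hW'⟩ => ?_⟩
  · exact fun i => (congrFun (hr_eq (by linarith)) i).symm
  · exact fun i => (congrFun (hl_eq (by linarith)) i).symm
  · have hW_eq : ∑ a, ∑ᶠ i, (WL a (i + 1) : ℤ) ^ 2 = ∑ a, ∑ᶠ i, (WM a (i + 1) : ℤ) ^ 2 := by
      simp only [← finsum_eq_sum_of_fintype]; linarith
    exact (sum_eq_sum_iff_of_le fun a _ => (hW a).1).1 hW_eq a (mem_univ a)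
  · obtain rfl : rL = rM := funext hr'
    obtain rfl : lL = lM := funext hl'
    rw [finsum_congr fun a => finsum_congr fun i => by rw [hW' a (i + 1) (by omega)]]

/-- Theorem 3.1 of the paper in the combinatorial case h = 0: under the
majorizations (M1)–(M3) between the Weyr characteristics of two pencils of
equal rank, the (normalized) codimension of the orbit of L is at most that of
M, with equality iff all the eigenstructure data coincide. -/
theorem stmt_19 (rL rM lL lM : ℕ → ℕ)
    (Λ : Type*) [Fintype Λ] (WL WM : Λ → ℕ → ℕ)
    (hrLmono : ∀ i, rL (i + 1) ≤ rL i) (hrMmono : ∀ i, rM (i + 1) ≤ rM i)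
    (hlLmono : ∀ i, lL (i + 1) ≤ lL i) (hlMmono : ∀ i, lM (i + 1) ≤ lM i)
    (hWLmono : ∀ a, ∀ i, 1 ≤ i → WL a (i + 1) ≤ WL a i)
    (hWMmono : ∀ a, ∀ i, 1 ≤ i → WM a (i + 1) ≤ WM a i)
    (hrL0 : ∃ N, ∀ i, N ≤ i → rL i = 0) (hrM0 : ∃ N, ∀ i, N ≤ i → rM i = 0)
    (hlL0 : ∃ N, ∀ i, N ≤ i → lL i = 0) (hlM0 : ∃ N, ∀ i, N ≤ i → lM i = 0)
    (hWL0 : ∀ a, ∃ N, ∀ i, N ≤ i → WL a i = 0)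
    (hWM0 : ∀ a, ∃ N, ∀ i, N ≤ i → WM a i = 0)
    (hr00 : rL 0 = rM 0) (hl00 : lL 0 = lM 0)
    (hM1 : ∀ j, 1 ≤ j →
      ∑ i ∈ Finset.Icc 1 j, rM i ≤ ∑ i ∈ Finset.Icc 1 j, rL i)
    (hM2 : ∀ j, 1 ≤ j →
      ∑ i ∈ Finset.Icc 1 j, lM i ≤ ∑ i ∈ Finset.Icc 1 j, lL i)
    (hM3 : ∀ a : Λ, ∀ j, 1 ≤ j →
      ∑ i ∈ Finset.Icc 1 j, WL a i ≤ ∑ i ∈ Finset.Icc 1 j, WM a i) :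
    (-(∑ᶠ i : ℕ, ((rL i : ℤ) * rL (i + 1))) -
        (∑ᶠ i : ℕ, ((lL i : ℤ) * lL (i + 1))) +
        ∑ᶠ a : Λ, ∑ᶠ i : ℕ, (WL a (i + 1) : ℤ) ^ 2 ≤
      -(∑ᶠ i : ℕ, ((rM i : ℤ) * rM (i + 1))) -
        (∑ᶠ i : ℕ, ((lM i : ℤ) * lM (i + 1))) +
        ∑ᶠ a : Λ, ∑ᶠ i : ℕ, (WM a (i + 1) : ℤ) ^ 2) ∧
    ((-(∑ᶠ i : ℕ, ((rL i : ℤ) * rL (i + 1))) -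
        (∑ᶠ i : ℕ, ((lL i : ℤ) * lL (i + 1))) +
        ∑ᶠ a : Λ, ∑ᶠ i : ℕ, (WL a (i + 1) : ℤ) ^ 2 =
      -(∑ᶠ i : ℕ, ((rM i : ℤ) * rM (i + 1))) -
        (∑ᶠ i : ℕ, ((lM i : ℤ) * lM (i + 1))) +
        ∑ᶠ a : Λ, ∑ᶠ i : ℕ, (WM a (i + 1) : ℤ) ^ 2) ↔
      (∀ i, rL i = rM i) ∧ (∀ i, lL i = lM i) ∧
        ∀ a : Λ, ∀ i, 1 ≤ i → WL a i = WM a i) :=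
  stmt_19_general rL rM lL lM Λ WL WM hrLmono hrMmono hlLmono hlMmono hWLmono hrL0 hrM0 hlL0 hlM0
    hWL0 hWM0 hr00 hl00 hM1 hM2 hM3
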